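/- Let G be a connected P5-free chordal bipartite graph with bipartition (A,B), maximum biclique (A1,B1), A2 = A \ A1 = (u_1,...,u_p) in Nested Neighborhood Ordering, and suppose G has a Hamiltonian cycle. Then |A| = |B| and for every g with 1 ≤ g ≤ p, deg(u_g) > g; similarly for every vertex v_h in the NNO ordering (v_1,...,v_q) of B2 = B \ B1, deg(v_h) > h. -/

import Mathlib

open SimpleGraph Finset

variable {V : Type*}

/-- `(A, B)` is a bipartition of the graph `G`. -/
def IsBipartitionOf (G : SimpleGraph V) (A B : Finset V) : Prop :=
  Disjoint A B ∧ (∀ v : V, v ∈ A ∨ v ∈ B) ∧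
    ∀ ⦃x y : V⦄, G.Adj x y → (x ∈ A ∧ y ∈ B) ∨ (x ∈ B ∧ y ∈ A)

/-- `G` has no induced path on `n` vertices. -/
def PFree (n : ℕ) (G : SimpleGraph V) : Prop :=
  ∀ f : Fin n → V, Function.Injective f →
    ¬ (∀ i j : Fin n, G.Adj (f i) (f j) ↔ ((i : ℕ) + 1 = (j : ℕ) ∨ (j : ℕ) + 1 = (i : ℕ)))

/-- Every cycle of length at least 6 has a chord. -/
def ChordalBipartite (G : SimpleGraph V) : Prop :=
  ∀ (v : V) (c : G.Walk v v), c.IsCycle → 6 ≤ c.length →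
    ∃ x y : V, x ∈ c.support ∧ y ∈ c.support ∧ G.Adj x y ∧ s(x, y) ∉ c.edges

/-- `(A1, B1)` is a maximal biclique of `G` within the bipartition `(A, B)`:
it is a complete bipartite subgraph and no vertex can be added to either side. -/
def IsMaximalBiclique (G : SimpleGraph V) (A B A1 B1 : Finset V) : Prop :=
  A1 ⊆ A ∧ B1 ⊆ B ∧ (∀ x ∈ A1, ∀ y ∈ B1, G.Adj x y) ∧
    (∀ x ∈ A, (∀ y ∈ B1, G.Adj x y) → x ∈ A1) ∧
    (∀ y ∈ B, (∀ x ∈ A1, G.Adj x y) → y ∈ B1)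

/-! In a connected `P₅`-free bipartite graph two vertices on the same side are at distance 2
(a shortest path of length at least 4 starts with an induced `P₅`), and two same-side vertices
with private neighbours `b`, `b'` and a common neighbour `c` would give the induced path
`b - x - c - y - b'`. So neighbourhoods on one side are nested, and `N(u₀), …, N(u_g)` all lie in
`N(u_g)`.

Read a Hamiltonian cycle as a cyclic permutation `σ` with `x ∼ σ x`. It swaps the two sides,
so `|A| = |B|`, and it maps any `S` injectively into every `T ⊇ N(S)`, as does `σ⁻¹`; if
`|S| = |T|` both are onto `T`, so `S ∪ T` is `σ`-invariant and hence is all of `V`. For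
`S = {u₀, …, u_g}` and `T = N(u_g)` this would make `u_g` adjacent to all of `B`, hence to
`B1`, and maximality of the biclique would put `u_g` into `A1`. -/

namespace IsBipartitionOf

variable {G : SimpleGraph V} {A B : Finset V} {x y : V}

lemma symm (h : IsBipartitionOf G A B) : IsBipartitionOf G B A :=
  ⟨h.1.symm, fun v => (h.2.1 v).symm, fun _ _ hxy => (h.2.2 hxy).symm⟩

lemma mem_right_of_adj (h : IsBipartitionOf G A B) (hx : x ∈ A) (hxy : G.Adj x y) : y ∈ B :=
  ((h.2.2 hxy).resolve_right fun h' => disjoint_left.mp h.1 hx h'.1).2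

lemma mem_left_iff_not_mem_left_of_adj (h : IsBipartitionOf G A B) (hxy : G.Adj x y) :
    x ∈ A ↔ y ∉ A := by
  rcases h.2.2 hxy with ⟨hx, hy⟩ | ⟨hx, hy⟩
  · exact iff_of_true hx fun hyA => disjoint_left.mp h.1 hyA hy
  · exact iff_of_false (fun hxA => disjoint_left.mp h.1 hxA hx) (not_not.mpr hy)

lemma not_adj_of_mem_left (h : IsBipartitionOf G A B) (hx : x ∈ A) (hy : y ∈ A) :
    ¬ G.Adj x y :=
  fun hxy => (h.mem_left_iff_not_mem_left_of_adj hxy).mp hx hy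

lemma mem_left_iff_even_length (h : IsBipartitionOf G A B) (w : G.Walk x y) :
    (x ∈ A ↔ y ∈ A) ↔ Even w.length := by
  induction w with
  | nil => simp
  | cons hadj q ih =>
    rw [Walk.length_cons, Nat.even_add_one, ← ih, h.mem_left_iff_not_mem_left_of_adj hadj]
    tauto

end IsBipartitionOf

namespace PFree

variable {G : SimpleGraph V}

lemma not_forall_adj_iff (h : PFree 5 G) (f : Fin 5 → V) :
    ¬ ∀ i j : Fin 5, G.Adj (f i) (f j) ↔ ((i : ℕ) + 1 = j ∨ (j : ℕ) + 1 = i) := by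
  intro hf
  refine h f (fun i j hij => ?_) hf
  have hpath_twin_free : ∀ i j : Fin 5,
      (∀ k : Fin 5, ((i : ℕ) + 1 = k ∨ (k : ℕ) + 1 = i) ↔ ((j : ℕ) + 1 = k ∨ (k : ℕ) + 1 = j)) →
        i = j := by
    decide
  exact hpath_twin_free i j fun k => (hf i k).symm.trans (by rw [hij]; exact hf j k)

lemma false_of_induced_path (h : PFree 5 G) {a b c d e : V}
    (hab : G.Adj a b) (hbc : G.Adj b c) (hcd : G.Adj c d) (hde : G.Adj d e)
    (hac : ¬ G.Adj a c) (had : ¬ G.Adj a d) (hae : ¬ G.Adj a e)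
    (hbd : ¬ G.Adj b d) (hbe : ¬ G.Adj b e) (hce : ¬ G.Adj c e) : False := by
  refine h.not_forall_adj_iff ![a, b, c, d, e] fun i j => ?_
  fin_cases i <;> fin_cases j <;>
    simp [hab, hbc, hcd, hde, hab.symm, hbc.symm, hcd.symm, hde.symm, hac, had, hae, hbd, hbe,
      hce, mt G.adj_symm hac, mt G.adj_symm had, mt G.adj_symm hae, mt G.adj_symm hbd,
      mt G.adj_symm hbe, mt G.adj_symm hce]

end PFree

lemma SimpleGraph.Walk.dist_getVert_getVert {G : SimpleGraph V} {u v : V} (w : G.Walk u v)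
    (hw : w.length = G.dist u v) {i j : ℕ} (hij : i ≤ j) (hj : j ≤ w.length) :
    G.dist (w.getVert i) (w.getVert j) = j - i := by
  have hle := G.dist_le ((w.drop i).take (j - i))
  rw [take_length, drop_length, drop_getVert, Nat.add_sub_cancel' hij] at hle
  obtain ⟨p, hp⟩ := Reachable.exists_walk_length_eq_dist
    ⟨(w.take i).reverse.append (w.take j)⟩
  have hge := G.dist_le (((w.take i).append p).append (w.drop j))
  simp only [length_append, take_length, drop_length, hp, ← hw] at hge
  omega

lemma PFree.dist_le_three {G : SimpleGraph V} (h : PFree 5 G) (x y : V) : G.dist x y ≤ 3 := by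
  by_contra! hxy
  obtain ⟨w, hw⟩ := exists_walk_of_dist_ne_zero (by omega : G.dist x y ≠ 0)
  refine h.not_forall_adj_iff (fun k => w.getVert k) fun i j => ?_
  rw [← dist_eq_one_iff_adj]
  rcases le_total (i : ℕ) j with hij | hij
  · rw [w.dist_getVert_getVert hw hij (by omega)]
    omega
  · rw [dist_comm, w.dist_getVert_getVert hw hij (by omega)]
    omega

section P5FreeBipartite

variable {G : SimpleGraph V} {A B : Finset V} {x y : V}

lemma exists_adj_adj_of_mem_left (hp5 : PFree 5 G) (hconn : G.Connected)
    (hbip : IsBipartitionOf G A B) (hx : x ∈ A) (hy : y ∈ A) (hxy : x ≠ y) :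
    ∃ z, G.Adj x z ∧ G.Adj y z := by
  obtain ⟨w, hw⟩ := hconn.exists_walk_length_eq_dist x y
  have heven : Even w.length := (hbip.mem_left_iff_even_length w).mp (iff_of_true hx hy)
  have hpos : w.length ≠ 0 := fun h0 => hxy (Walk.eq_of_length_eq_zero h0)
  have hlen : w.length = 2 := by
    have := hp5.dist_le_three x y
    obtain ⟨k, hk⟩ := heven
    omega
  have h01 := w.adj_getVert_succ (i := 0) (by omega)
  have h12 := w.adj_getVert_succ (i := 1) (by omega)
  rw [Walk.getVert_zero] at h01
  rw [show 1 + 1 = w.length by omega, Walk.getVert_length] at h12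
  exact ⟨_, h01, h12.symm⟩

lemma neighborSet_subset_or_subset (hp5 : PFree 5 G) (hconn : G.Connected)
    (hbip : IsBipartitionOf G A B) (hx : x ∈ A) (hy : y ∈ A) :
    G.neighborSet x ⊆ G.neighborSet y ∨ G.neighborSet y ⊆ G.neighborSet x := by
  by_cases hxy : x = y
  · exact Or.inl (hxy ▸ subset_rfl)
  by_contra! hcon
  simp only [Set.not_subset, mem_neighborSet] at hcon
  obtain ⟨⟨b, hxb, hyb⟩, ⟨b', hyb', hxb'⟩⟩ := hcon
  obtain ⟨c, hxc, hyc⟩ := exists_adj_adj_of_mem_left hp5 hconn hbip hx hy hxy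
  have hb := hbip.mem_right_of_adj hx hxb
  have hc := hbip.mem_right_of_adj hx hxc
  have hb' := hbip.mem_right_of_adj hy hyb'
  -- otherwise `b - x - c - y - b'` is an induced path
  exact hp5.false_of_induced_path hxb.symm hxc hyc.symm hyb'
    (hbip.symm.not_adj_of_mem_left hb hc) (fun h => hyb h.symm)
    (hbip.symm.not_adj_of_mem_left hb hb') (hbip.not_adj_of_mem_left hx hy) hxb'
    (hbip.symm.not_adj_of_mem_left hc hb')

lemma neighborFinset_subset_of_degree_le [Fintype V] [DecidableRel G.Adj] (hp5 : PFree 5 G)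
    (hconn : G.Connected) (hbip : IsBipartitionOf G A B) (hx : x ∈ A) (hy : y ∈ A)
    (hdeg : G.degree x ≤ G.degree y) : G.neighborFinset x ⊆ G.neighborFinset y := by
  rcases neighborSet_subset_or_subset hp5 hconn hbip hx hy with h | h
  · exact Set.toFinset_subset_toFinset.mpr h
  · have hyx : G.neighborFinset y ⊆ G.neighborFinset x := Set.toFinset_subset_toFinset.mpr h
    exact (eq_of_subset_of_card_le hyx (by simpa using hdeg)).ge

end P5FreeBipartite

namespace SimpleGraph.Walk.IsHamiltonianCycle

variable {G : SimpleGraph V} [Fintype V] [DecidableEq V] {a : V} {c : G.Walk a a}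

lemma exists_perm (hc : c.IsHamiltonianCycle) :
    ∃ σ : Equiv.Perm V, (∀ x, G.Adj x (σ x)) ∧ ∀ x y, ∃ k : ℕ, (σ ^ k) x = y := by
  set n := c.length
  have hn : 3 ≤ n := hc.isCycle.three_le_length
  have : NeZero n := ⟨by omega⟩
  have : Fact (1 < n) := ⟨by omega⟩
  let F : ZMod n → V := fun i => c.getVert i.val
  have hF : F.Bijective := by
    refine (Fintype.bijective_iff_injective_and_card F).mpr ⟨fun i j hij => ?_, ?_⟩
    · have hi := ZMod.val_lt i
      have hj := ZMod.val_lt j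
      exact ZMod.val_injective n
        (hc.isCycle.getVert_injOn' (by simp only [Set.mem_ofPred_eq]; omega)
          (by simp only [Set.mem_ofPred_eq]; omega) hij)
    · exact (ZMod.card n).trans hc.length_eq
  have hFadj : ∀ i, G.Adj (F i) (F (i + 1)) := by
    intro i
    have hi := ZMod.val_lt i
    suffices c.getVert (i.val + 1) = F (i + 1) from this ▸ c.adj_getVert_succ hi
    simp only [F, ZMod.val_add, ZMod.val_one]
    rcases (show i.val + 1 ≤ n by omega).lt_or_eq with hlt | heq
    · rw [Nat.mod_eq_of_lt hlt]
    · rw [heq, Nat.mod_self, getVert_zero, getVert_length]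
  let e := Equiv.ofBijective F hF
  let σ : Equiv.Perm V := e.symm.trans ((Equiv.addRight 1).trans e)
  have hσpow : ∀ x (k : ℕ), (σ ^ k) x = e (e.symm x + k) := by
    intro x k
    induction k with
    | zero => simp
    | succ k ih => simp [pow_succ', ih, σ, add_assoc]
  refine ⟨σ, fun x => ?_, fun x y => ⟨(e.symm y - e.symm x).val, ?_⟩⟩
  · obtain ⟨i, rfl⟩ := e.surjective x
    simpa [σ, e] using hFadj i
  · rw [hσpow, ZMod.natCast_zmod_val, add_sub_cancel, e.apply_symm_apply]

lemma card_eq_card_of_isBipartitionOf {A B : Finset V} (hc : c.IsHamiltonianCycle)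
    (hbip : IsBipartitionOf G A B) : #A = #B := by
  obtain ⟨σ, hσ, -⟩ := hc.exists_perm
  have hle : ∀ {A B : Finset V}, IsBipartitionOf G A B → #A ≤ #B := fun hbip =>
    card_le_card_of_injOn σ (fun x hx => hbip.mem_right_of_adj hx (hσ x)) σ.injective.injOn
  exact (hle hbip).antisymm (hle hbip.symm)

lemma card_lt_or_union_eq_univ (hc : c.IsHamiltonianCycle) {S T : Finset V}
    (hS : S.Nonempty) (hST : ∀ x ∈ S, ∀ y, G.Adj x y → y ∈ T) : #S < #T ∨ S ∪ T = univ := by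
  obtain ⟨σ, hσ, htrans⟩ := hc.exists_perm
  have hfwd : S.image σ ⊆ T := by
    simpa only [image_subset_iff] using fun x hx => hST x hx _ (hσ x)
  have hbwd : S.image σ.symm ⊆ T := by
    simpa only [image_subset_iff] using
      fun x hx => hST x hx _ (by simpa using (hσ (σ.symm x)).symm)
  rw [← card_image_of_injective S σ.injective]
  refine (card_le_card hfwd).lt_or_eq.imp id fun heq => ?_
  have hT : T ⊆ S.image σ.symm := (eq_of_subset_of_card_le hbwd (by
    rw [card_image_of_injective S σ.symm.injective, ← heq,
      card_image_of_injective S σ.injective])).ge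
  have hinv : ∀ x ∈ S ∪ T, σ x ∈ S ∪ T := by
    intro x hx
    rcases mem_union.mp hx with hx | hx
    · exact mem_union_right _ (hfwd (mem_image_of_mem σ hx))
    · obtain ⟨y, hy, rfl⟩ := mem_image.mp (hT hx)
      simpa using mem_union_left T hy
  obtain ⟨x, hx⟩ := hS
  refine eq_univ_of_forall fun y => ?_
  obtain ⟨k, rfl⟩ := htrans x y
  induction k with
  | zero => exact mem_union_left _ hx
  | succ k ih => simpa only [pow_succ', Equiv.Perm.mul_apply] using hinv _ ih

lemma add_one_lt_degree [DecidableRel G.Adj] (hc : c.IsHamiltonianCycle)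
    {A B A1 B1 : Finset V} {p : ℕ} {u : Fin p → V} (hconn : G.Connected)
    (hbip : IsBipartitionOf G A B) (hp5 : PFree 5 G) (hB1 : B1 ⊆ B)
    (hmax : ∀ x ∈ A, (∀ y ∈ B1, G.Adj x y) → x ∈ A1) (hu : Function.Injective u)
    (huA : ∀ i, u i ∈ A \ A1) (humono : Monotone fun i => G.degree (u i)) (g : Fin p) :
    (g : ℕ) + 1 < G.degree (u g) := by
  have huA' : ∀ i, u i ∈ A := fun i => (mem_sdiff.mp (huA i)).1
  set S := (Iic g).image u
  have hS : #S = g + 1 := by rw [card_image_of_injective _ hu, Fin.card_Iic]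
  have hST : ∀ x ∈ S, ∀ y, G.Adj x y → y ∈ G.neighborFinset (u g) := by
    simp only [S, mem_image, mem_Iic]
    rintro _ ⟨i, hi, rfl⟩ y hy
    exact neighborFinset_subset_of_degree_le hp5 hconn hbip (huA' i) (huA' g) (humono hi)
      ((mem_neighborFinset _ _ _).mpr hy)
  rcases hc.card_lt_or_union_eq_univ ⟨u g, mem_image_of_mem u (mem_Iic.mpr le_rfl)⟩ hST
    with h | h
  · rwa [hS, card_neighborFinset_eq_degree] at h
  refine absurd (hmax _ (huA' g) fun y hy => ?_) (mem_sdiff.mp (huA g)).2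
  rcases mem_union.mp (h ▸ mem_univ y) with hyS | hyN
  · obtain ⟨i, -, rfl⟩ := mem_image.mp hyS
    exact absurd (hB1 hy) (Finset.disjoint_left.mp hbip.1 (huA' i))
  · exact (mem_neighborFinset _ _ _).mp hyN

end SimpleGraph.Walk.IsHamiltonianCycle

theorem stmt6_general [Fintype V] [DecidableEq V] (G : SimpleGraph V) [DecidableRel G.Adj]
    (A B A1 B1 : Finset V) {p q : ℕ} (u : Fin p → V) (v : Fin q → V)
    (hconn : G.Connected) (hbip : IsBipartitionOf G A B)
    (hp5 : PFree 5 G)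
    (hmax : IsMaximalBiclique G A B A1 B1)
    -- `u` enumerates `A \ A1` in non-decreasing degree order (NNO)
    (hu : Function.Injective u) (huA : ∀ i, u i ∈ A \ A1)
    (humono : ∀ i j : Fin p, i ≤ j → G.degree (u i) ≤ G.degree (u j))
    -- `v` enumerates `B \ B1` in non-decreasing degree order (NNO)
    (hv : Function.Injective v) (hvB : ∀ j, v j ∈ B \ B1)
    (hvmono : ∀ i j : Fin q, i ≤ j → G.degree (v i) ≤ G.degree (v j))
    (hham : ∃ (a : V) (c : G.Walk a a), c.IsHamiltonianCycle) :
    A.card = B.card ∧ (∀ g : Fin p, (g : ℕ) + 1 < G.degree (u g)) ∧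
      (∀ h : Fin q, (h : ℕ) + 1 < G.degree (v h)) := by
  obtain ⟨hA1, hB1, -, hmaxA, hmaxB⟩ := hmax
  obtain ⟨a, c, hc⟩ := hham
  refine ⟨hc.card_eq_card_of_isBipartitionOf hbip, ?_, ?_⟩
  · exact hc.add_one_lt_degree hconn hbip hp5 hB1 hmaxA hu huA fun i j => humono i j
  · exact hc.add_one_lt_degree hconn hbip.symm hp5 hA1
      (fun y hy hadj => hmaxB y hy fun x hx => (hadj x hx).symm) hv hvB fun i j => hvmono i j

theorem stmt6 [Fintype V] [DecidableEq V] (G : SimpleGraph V) [DecidableRel G.Adj]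
    (A B A1 B1 : Finset V) {p q : ℕ} (u : Fin p → V) (v : Fin q → V)
    (hconn : G.Connected) (hbip : IsBipartitionOf G A B)
    (hcb : ChordalBipartite G) (hp5 : PFree 5 G)
    (hmax : IsMaximalBiclique G A B A1 B1)
    -- `u` enumerates `A \ A1` in non-decreasing degree order (NNO)
    (hu : Function.Injective u) (huA : ∀ i, u i ∈ A \ A1)
    (huAll : ∀ x ∈ A \ A1, ∃ i, u i = x)
    (humono : ∀ i j : Fin p, i ≤ j → G.degree (u i) ≤ G.degree (u j))
    -- `v` enumerates `B \ B1` in non-decreasing degree order (NNO)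
    (hv : Function.Injective v) (hvB : ∀ j, v j ∈ B \ B1)
    (hvAll : ∀ y ∈ B \ B1, ∃ j, v j = y)
    (hvmono : ∀ i j : Fin q, i ≤ j → G.degree (v i) ≤ G.degree (v j))
    (hham : ∃ (a : V) (c : G.Walk a a), c.IsHamiltonianCycle) :
    A.card = B.card ∧ (∀ g : Fin p, (g : ℕ) + 1 < G.degree (u g)) ∧
      (∀ h : Fin q, (h : ℕ) + 1 < G.degree (v h)) :=
  stmt6_general G A B A1 B1 u v hconn hbip hp5 hmax hu huA humono hv hvB hvmono hham
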